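/- arXiv:2602.21184 — 5 statements merged into one kernel-verified Lean document; each statement's English description precedes it below -/
import Mathlib

section
/- Let X be a topological space and {U_i}_{i∈I} a finite open cover of X. Let J be the poset of nonempty subsets T ⊆ I with |T| ≤ 3, ordered by reverse inclusion (T ≤ T′ iff T ⊇ T′), and let D : J → Top be the diagram sending T to U_T := ⋂_{i∈T} U_i (with the subspace topology) and each relation T ⊇ T′ to the inclusion U_T ⊆ U_{T′}. Then the cocone given by the inclusions U_T ↪ X exhibits X as the colimit of D in the category of topological spaces. -/
open CategoryTheory Topology Set Limits

/-- The index poset of nonempty subsets `T ⊆ I` with `|T| ≤ 3`, ordered by **reverse**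
inclusion: `T ≤ T′` iff `T ⊇ T′`. -/
def CoverIndex (I : Type*) : Type _ := {T : Finset I // T.Nonempty ∧ T.card ≤ 3}

instance (I : Type*) : Preorder (CoverIndex I) where
  le T T' := T'.1 ⊆ T.1
  le_refl _ _ hx := hx
  le_trans _ _ _ hab hbc _ hx := hab (hbc hx)

variable {X : Type} [TopologicalSpace X] {I : Type} (U : I → Set X)

/-- The diagram `T ↦ U_T := ⋂_{i∈T} U_i` (with the subspace topology), sending each
relation `T ⊇ T′` to the inclusion `U_T ⊆ U_{T′}`. -/
def interDiagram : CoverIndex I ⥤ TopCat where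
  obj T := TopCat.of (⋂ i ∈ T.1, U i : Set X)
  map {T T'} f :=
    TopCat.ofHom ⟨Set.inclusion (biInter_subset_biInter_left (show (T'.1 : Finset I) ⊆ T.1 from leOfHom f)),
      continuous_inclusion _⟩

/-- The cocone over `interDiagram` given by the inclusions `U_T ↪ X`. -/
def interCocone : Cocone (interDiagram U) where
  pt := TopCat.of X
  ι := { app := fun _ => TopCat.ofHom ⟨Subtype.val, continuous_subtype_val⟩ }

/- Only the entries with `|T| ≤ 2` matter. A cocone `s` gives maps `U_i → s.pt` (its legs at
the singletons `{i}`), and its legs at the pairs `{i, j}` force any two of them to agree on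
`U_i ∩ U_j`. Since the `U_i` are open, these maps glue to a continuous map `X → s.pt`, which
restricts to every leg of `s` (each `U_T` lies in some `U_i`), and is the only such map since
the `U_i` cover `X`. -/

namespace CoverIndex

def single (i : I) : CoverIndex I := ⟨{i}, Finset.singleton_nonempty i, by simp⟩

def pair [DecidableEq I] (i j : I) : CoverIndex I :=
  ⟨{i, j}, Finset.insert_nonempty i {j}, Finset.card_le_two.trans (by norm_num)⟩

lemma le_single {T : CoverIndex I} {i : I} (hi : i ∈ T.1) : T ≤ single i :=
  Finset.singleton_subset_iff.2 hi

end CoverIndex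

open CoverIndex

omit [TopologicalSpace X] in
lemma mem_biInter_single_iff {x : X} {i : I} :
    x ∈ ⋂ j ∈ (single i : CoverIndex I).1, U j ↔ x ∈ U i := by
  simp [single]

lemma interDiagram_cocone_apply_of_le (s : Cocone (interDiagram U)) {T T' : CoverIndex I}
    (h : T ≤ T') (x : X) (hx : x ∈ ⋂ i ∈ T.1, U i) :
    s.ι.app T ⟨x, hx⟩ =
      s.ι.app T' ⟨x, biInter_subset_biInter_left (show T'.1 ⊆ T.1 from h) hx⟩ :=
  (s.w_apply (homOfLE h) ⟨x, hx⟩).symm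

def coverLeg (s : Cocone (interDiagram U)) (i : I) : C(U i, s.pt) :=
  (s.ι.app (single i)).hom.comp
    (ContinuousMap.inclusion fun _ hx => (mem_biInter_single_iff U).2 hx)

lemma coverLeg_agree (s : Cocone (interDiagram U)) (i j : I) (x : X)
    (hi : x ∈ U i) (hj : x ∈ U j) :
    coverLeg U s i ⟨x, hi⟩ = coverLeg U s j ⟨x, hj⟩ := by
  classical
  have hx : x ∈ ⋂ k ∈ (CoverIndex.pair i j).1, U k := by
    simp only [CoverIndex.pair, Finset.mem_insert, Finset.mem_singleton, mem_iInter]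
    rintro k (rfl | rfl) <;> assumption
  have through_pair (k : I) (hk : k ∈ (CoverIndex.pair i j).1) :=
    interDiagram_cocone_apply_of_le U s (le_single hk) x hx
  exact (through_pair i (by simp [CoverIndex.pair])).symm.trans
    (through_pair j (by simp [CoverIndex.pair]))

variable {U}

noncomputable def coverDesc (hopen : ∀ i, IsOpen (U i)) (hcov : ⋃ i, U i = Set.univ)
    (s : Cocone (interDiagram U)) : C(X, s.pt) :=
  ContinuousMap.liftCover U (coverLeg U s) (coverLeg_agree U s) fun x =>
    (iUnion_eq_univ_iff.1 hcov x).imp fun i hi => (hopen i).mem_nhds hi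

lemma coverDesc_apply (hopen : ∀ i, IsOpen (U i)) (hcov : ⋃ i, U i = Set.univ)
    (s : Cocone (interDiagram U)) (T : CoverIndex I) (x : X) (hx : x ∈ ⋂ i ∈ T.1, U i) :
    coverDesc hopen hcov s x = s.ι.app T ⟨x, hx⟩ := by
  obtain ⟨j, hj⟩ := T.2.1
  rw [interDiagram_cocone_apply_of_le U s (le_single hj) x hx]
  exact ContinuousMap.liftCover_coe (⟨x, mem_iInter₂.1 hx j hj⟩ : U j)

theorem interCocone_isColimit_general
    (hopen : ∀ i, IsOpen (U i)) (hcov : ⋃ i, U i = Set.univ) :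
    Nonempty (IsColimit (interCocone U)) := by
  refine ⟨{ desc := fun s => TopCat.ofHom (coverDesc hopen hcov s),
            fac := fun s T => ?_,
            uniq := fun s m hm => ?_ }⟩
  · ext ⟨x, hx⟩
    exact coverDesc_apply hopen hcov s T x hx
  · ext x
    obtain ⟨i, hi⟩ := iUnion_eq_univ_iff.1 hcov x
    have hx := (mem_biInter_single_iff U).2 hi
    exact (ConcreteCategory.congr_hom (hm (single i)) ⟨x, hx⟩).trans
      (coverDesc_apply hopen hcov s _ x hx).symm

/-- Let `X` be a topological space and `{U_i}_{i∈I}` a finite open cover.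
Then the cocone given by the inclusions `U_T ↪ X` (for nonempty `T ⊆ I`, `|T| ≤ 3`) exhibits
`X` as the colimit in `Top` of the diagram of the intersections `U_T` and their inclusions. -/
theorem interCocone_isColimit [Finite I]
    (hopen : ∀ i, IsOpen (U i)) (hcov : ⋃ i, U i = Set.univ) :
    Nonempty (IsColimit (interCocone U)) :=
  interCocone_isColimit_general hopen hcov
end

section
/- Let S be a quasi-compact semi-separated scheme and {U_i}_{i∈I} a finite cover of S by affine open subschemes. Then for every nonempty T ⊆ I with |T| ≤ 3 the intersection U_T := ⋂_{i∈T} U_i is affine, and the cocone consisting of the composite morphisms Spec Γ(U_T, 𝒪_S) ≅ U_T ↪ S exhibits S as the colimit, in the category of locally ringed spaces, of the diagram sending each nonempty T ⊆ I with |T| ≤ 3 to Spec Γ(U_T, 𝒪_S), with the arrows for T ⊇ T′ given by Spec applied to the restriction maps Γ(U_{T′}, 𝒪_S) → Γ(U_T, 𝒪_S). -/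
open CategoryTheory Topology TopologicalSpace AlgebraicGeometry Limits Opposite

universe u

variable (S : Scheme.{u}) {I : Type} (U : I → S.Opens)

/-- The open set `U_T := ⋂_{i ∈ T} U_i`. -/
def interOpens (T : CoverIndex I) : S.Opens := T.1.inf U

/-- The diagram `T ↦ Spec Γ(U_T, 𝒪_S)`, sending each relation `T ⊇ T′` to `Spec` applied
to the restriction map `Γ(U_{T′}, 𝒪_S) ⟶ Γ(U_T, 𝒪_S)`. -/
noncomputable def specDiagram : CoverIndex I ⥤ Scheme.{u} where
  obj T := Spec (S.presheaf.obj (op (interOpens S U T)))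
  map {T T'} f := Spec.map (S.presheaf.map (homOfLE
    (Finset.inf_mono (show (T'.1 : Finset I) ⊆ T.1 from leOfHom f))).op)
  map_id T := by
    exact (congrArg Spec.map (S.presheaf.map_id (op (interOpens S U T)))).trans (Spec.map_id _)
  map_comp {T T' T''} f g := by
    rw [← Spec.map_comp]
    congr 1
    first
      | (erw [← Functor.map_comp]; rfl)
      | (simp only [← Functor.map_comp]; rfl)
      | exact (S.presheaf.map_comp _ _)

/-- The cocone over `specDiagram` given by the composites
`Spec Γ(U_T, 𝒪_S) ≅ U_T ↪ S` (i.e. the canonical maps `IsAffineOpen.fromSpec`). -/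
noncomputable def specCocone (hA : ∀ T : CoverIndex I, IsAffineOpen (interOpens S U T)) :
    Cocone (specDiagram S U) where
  pt := S
  ι :=
    { app := fun T => (hA T).fromSpec
      naturality := fun T T' f => by
        dsimp only [specDiagram]
        simp only [Functor.const_obj_map, Category.comp_id]
        exact (hA T').map_fromSpec (hA T) _ }

/-!
Because `U_A ∩ U_B = U_{A ∪ B}`, the affine opens `U_T` for *all* nonempty finite `T ⊆ I`
form a locally directed open cover of `S`, and `S` is the colimit of such a cover, also in
locally ringed spaces. The subsets with at most three elements form a final subdiagram: the
nonempty subsets of any `T` with at most three elements are connected to each other through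
singletons and pairs.
-/

namespace AlgebraicGeometry

open OrderDual

variable {X : Scheme.{u}} {ι : Type*}

theorem isAffineOpen_finset_inf
    (hX : ∀ V W : X.Opens, IsAffineOpen V → IsAffineOpen W → IsAffineOpen (V ⊓ W))
    {V : ι → X.Opens} (hV : ∀ i, IsAffineOpen (V i)) {T : Finset ι} (hT : T.Nonempty) :
    IsAffineOpen (T.inf V) := by
  induction hT using Finset.Nonempty.cons_induction with
  | singleton i => simpa using hV i
  | cons i T _ _ ih => simpa using hX _ _ (hV i) ih

theorem IsAffineOpen.isOpenImmersion_spec_map_presheaf_map {U W : X.Opens}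
    (hU : IsAffineOpen U) (hW : IsAffineOpen W) (f : op U ⟶ op W) :
    IsOpenImmersion (Spec.map (X.presheaf.map f)) := by
  have : IsOpenImmersion (Spec.map (X.presheaf.map f) ≫ hU.fromSpec) := by
    rw [hU.map_fromSpec hW]; infer_instance
  exact .of_comp _ hU.fromSpec

theorem Scheme.exists_pullback_lift_eq_of_range_inter_subset {Y Z W : Scheme.{u}}
    {f : Y ⟶ X} {g : Z ⟶ X} [IsOpenImmersion f] [IsOpenImmersion g] {k : W ⟶ X}
    (a : W ⟶ Y) (b : W ⟶ Z) (ha : a ≫ f = k) (hb : b ≫ g = k)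
    (h : Set.range f ∩ Set.range g ⊆ Set.range k) (x : (pullback f g).carrier) :
    ∃ y, pullback.lift a b (ha.trans hb.symm) y = x := by
  obtain ⟨y, hy⟩ := h ((IsOpenImmersion.range_pullback_to_base_of_left f g).le ⟨x, rfl⟩)
  refine ⟨y, (pullback.fst f g ≫ f).isOpenEmbedding.injective ?_⟩
  rw [← Scheme.Hom.comp_apply, pullback.lift_fst_assoc, ha, hy]

variable (V : ι → X.Opens)

noncomputable def Scheme.specFinsetInfDiagram :
    {T : Finset ι // T.Nonempty}ᵒᵈ ⥤ Scheme.{u} where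
  obj T := Spec (X.presheaf.obj (op ((ofDual T).1.inf V)))
  map f := Spec.map (X.presheaf.map (homOfLE (Finset.inf_mono (leOfHom f))).op)
  map_id T := by rw [← Spec.map_id]; exact congrArg Spec.map (X.presheaf.map_id _)
  map_comp f g := by rw [← Spec.map_comp]; exact congrArg Spec.map (X.presheaf.map_comp _ _)

variable {V} (hV : ∀ T : Finset ι, T.Nonempty → IsAffineOpen (T.inf V))
  (hcov : ∀ x : X, ∃ i, x ∈ V i)

noncomputable def Scheme.specFinsetInfCover : X.OpenCover :=
  .mkOfCovers {T : Finset ι // T.Nonempty}ᵒᵈ (Scheme.specFinsetInfDiagram V).obj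
    (fun T ↦ (hV _ (ofDual T).2).fromSpec) (fun x ↦ by
      obtain ⟨i, hi⟩ := hcov x
      obtain ⟨y, hy⟩ : x ∈ Set.range (hV {i} (Finset.singleton_nonempty i)).fromSpec := by
        simpa [IsAffineOpen.range_fromSpec] using hi
      exact ⟨toDual ⟨{i}, Finset.singleton_nonempty i⟩, y, hy⟩)
    fun T ↦ (hV _ (ofDual T).2).isOpenImmersion_fromSpec

instance : Preorder (Scheme.specFinsetInfCover hV hcov).I₀ :=
  inferInstanceAs (Preorder {T : Finset ι // T.Nonempty}ᵒᵈ)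

noncomputable instance : (Scheme.specFinsetInfCover hV hcov).LocallyDirected where
  trans := (Scheme.specFinsetInfDiagram V).map
  trans_id := (Scheme.specFinsetInfDiagram V).map_id
  trans_comp := (Scheme.specFinsetInfDiagram V).map_comp
  w {_ T'} _ := (hV _ (ofDual T').2).map_fromSpec _ _
  directed {T T'} x := by
    classical
    obtain ⟨A, hA⟩ := T
    obtain ⟨B, hB⟩ := T'
    have hAB : (A ∪ B).Nonempty := hA.mono Finset.subset_union_left
    let K : {T : Finset ι // T.Nonempty}ᵒᵈ := toDual ⟨A ∪ B, hAB⟩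
    have hAK : K ≤ toDual ⟨A, hA⟩ := show A ⊆ A ∪ B from Finset.subset_union_left
    have hBK : K ≤ toDual ⟨B, hB⟩ := show B ⊆ A ∪ B from Finset.subset_union_right
    have hK : Set.range (hV _ hA).fromSpec ∩ Set.range (hV _ hB).fromSpec ⊆
        Set.range (hV _ hAB).fromSpec := by
      rw [(hV _ hA).range_fromSpec, (hV _ hB).range_fromSpec, (hV _ hAB).range_fromSpec,
        Finset.inf_union, Opens.coe_inf]
    obtain ⟨y, hy⟩ := Scheme.exists_pullback_lift_eq_of_range_inter_subset
      (f := (hV _ hA).fromSpec) (g := (hV _ hB).fromSpec)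
      ((Scheme.specFinsetInfDiagram V).map (homOfLE hAK))
      ((Scheme.specFinsetInfDiagram V).map (homOfLE hBK))
      ((hV _ hA).map_fromSpec _ _) ((hV _ hB).map_fromSpec _ _) hK x
    exact ⟨K, homOfLE hAK, homOfLE hBK, y, hy⟩
  property_trans {T T'} _ :=
    (hV _ (ofDual T').2).isOpenImmersion_spec_map_presheaf_map (hV _ (ofDual T).2) _

end AlgebraicGeometry

section

open OrderDual

def CoverIndex.toNonemptyFinset (I : Type*) : CoverIndex I ⥤ {T : Finset I // T.Nonempty}ᵒᵈ :=
  Monotone.functor (f := fun T ↦ toDual ⟨T.1, T.2.1⟩) fun _ _ h ↦ h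

instance (I : Type*) : (CoverIndex.toNonemptyFinset I).Final := by
  classical
  refine ⟨fun d ↦ ?_⟩
  let arrow (T : Finset I) (hT : T.Nonempty) (hT2 : T.card ≤ 2) (hTd : T ⊆ (ofDual d).1) :
      StructuredArrow d (CoverIndex.toNonemptyFinset I) :=
    StructuredArrow.mk (S := d) (T := CoverIndex.toNonemptyFinset I)
      (Y := show CoverIndex I from ⟨T, hT, hT2.trans (by norm_num)⟩)
      (homOfLE (show d ≤ toDual ⟨T, hT⟩ from hTd))
  let single (i : I) (hi : i ∈ (ofDual d).1) :=
    arrow {i} (Finset.singleton_nonempty i) (by simp) (Finset.singleton_subset_iff.mpr hi)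
  have zigzag_of_le (a b : StructuredArrow d (CoverIndex.toNonemptyFinset I))
      (h : a.right ≤ b.right) : Zigzag a b :=
    Zigzag.of_hom (StructuredArrow.homMk (homOfLE h) (Subsingleton.elim _ _))
  have zigzag_single (a : StructuredArrow d (CoverIndex.toNonemptyFinset I)) :
      ∃ i hi, Zigzag a (single i hi) := by
    obtain ⟨i, hi⟩ := a.right.2.1
    exact ⟨i, leOfHom a.hom hi, zigzag_of_le _ _ (Finset.singleton_subset_iff.mpr hi)⟩
  have single_zigzag_single (i j : I) (hi hj) : Zigzag (single i hi) (single j hj) := by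
    let pair := arrow {i, j} (Finset.insert_nonempty i {j}) Finset.card_le_two
      (Finset.insert_subset hi (Finset.singleton_subset_iff.mpr hj))
    have hi_pair : ({i} : Finset I) ⊆ {i, j} := by simp
    have hj_pair : ({j} : Finset I) ⊆ {i, j} := by simp
    exact (zigzag_of_le pair _ hi_pair).symm.trans (zigzag_of_le pair _ hj_pair)
  obtain ⟨i, hi⟩ := (ofDual d).2
  have : Nonempty (StructuredArrow d (CoverIndex.toNonemptyFinset I)) := ⟨single i hi⟩
  refine zigzag_isConnected fun a b ↦ ?_
  obtain ⟨i, hi, ha⟩ := zigzag_single a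
  obtain ⟨j, hj, hb⟩ := zigzag_single b
  exact ha.trans ((single_zigzag_single i j hi hj).trans hb.symm)

end

theorem specCocone_isColimit
    (hsemisep : ∀ V W : S.Opens, IsAffineOpen V → IsAffineOpen W → IsAffineOpen (V ⊓ W))
    (haff : ∀ i, IsAffineOpen (U i)) (hcov : ∀ x : S, ∃ i, x ∈ U i) :
    ∃ hA : ∀ T : CoverIndex I, IsAffineOpen (interOpens S U T),
      Nonempty (IsColimit
        (Scheme.forgetToLocallyRingedSpace.mapCocone (specCocone S U hA))) := by
  have hV (T : Finset I) (hT : T.Nonempty) : IsAffineOpen (T.inf U) :=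
    isAffineOpen_finset_inf hsemisep haff hT
  refine ⟨fun T ↦ hV T.1 T.2.1, ⟨?_⟩⟩
  have hS := isColimitOfPreserves Scheme.forgetToLocallyRingedSpace
    (Scheme.specFinsetInfCover hV hcov).isColimitCoconeOfLocallyDirected
  exact (Functor.Final.isColimitWhiskerEquiv (CoverIndex.toNonemptyFinset I) _).symm hS
end

section
/- Let f : X → Y be a morphism of schemes such that f is an affine morphism and the induced morphism of sheaves 𝒪_Y → f_*𝒪_X is an isomorphism. Then f is an isomorphism of schemes. -/
open AlgebraicGeometry CategoryTheory

/- Being an isomorphism is local on the target, and over an affine open `U` the restriction of an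
affine morphism is a morphism of affine schemes, hence an isomorphism iff it is one on
global sections `f.app U`. -/

theorem AlgebraicGeometry.Scheme.Hom.isIso_of_isAffineHom_of_isIso_app_affineOpens
    {X Y : Scheme} (f : X ⟶ Y) [IsAffineHom f]
    (H : ∀ U : Y.affineOpens, IsIso (f.app U)) : IsIso f :=
  IsZariskiLocalAtTarget.of_iSup_eq_top (P := MorphismProperty.isomorphisms Scheme)
    (fun U : Y.affineOpens ↦ (U : Y.Opens)) (iSup_affineOpens_eq_top Y)
    fun U ↦ (isIso_morphismRestrict_iff_isIso_app f U.2).mpr (H U)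

/-- A morphism of schemes `f : X ⟶ Y` which is affine (preimages of affine
opens are affine) and such that the induced morphism of sheaves `𝒪_Y ⟶ f_* 𝒪_X` is an
isomorphism, is an isomorphism of schemes. -/
theorem isIso_of_isAffineHom_of_isIso_c
    {X Y : Scheme} (f : X ⟶ Y) [IsAffineHom f] (h : IsIso f.c) :
    IsIso f :=
  f.isIso_of_isAffineHom_of_isIso_app_affineOpens fun U ↦
    inferInstanceAs (IsIso (f.c.app (Opposite.op U.1)))
end

section
/- Let S be a quasi-compact semi-separated scheme and 𝒰 = {U_i}_{i∈I} a finite cover of S by affine open subschemes. For s ∈ S set U^s := ⋂{U_i : s ∈ U_i}; each U^s is an affine open subscheme of S. Let 𝒥 := {U^s : s ∈ S}, a finite set of affine opens of S, regarded as a poset under inclusion. Then the cocone consisting of the open immersions U^s ↪ S exhibits S as the colimit, in the category of locally ringed spaces, of the diagram sending each member W of 𝒥 to the open subscheme W and each inclusion W ⊆ W′ in 𝒥 to the corresponding open immersion. -/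
/-!
If `x ∈ U^s` then every `U_i` containing `s` contains `x`, so `U^x ⊆ U^s`. Hence a point `x` of
`U^s ∩ U^t` has the neighbourhood `U^x ⊆ U^s ∩ U^t` in `𝒥`, i.e. the open cover of `S` by the
members of `𝒥` is locally directed. A scheme is the colimit of a locally directed open cover,
and `Scheme.forgetToLocallyRingedSpace` preserves colimits of locally directed diagrams of open
immersions, so the colimit persists in locally ringed spaces.
-/

open CategoryTheory Topology TopologicalSpace AlgebraicGeometry Limits Opposite

universe u

variable (S : Scheme.{u}) {I : Type} [Fintype I] (U : I → S.Opens)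

open Classical in
/-- For `s ∈ S`, the open set `U^s := ⋂ {U_i : s ∈ U_i}`. -/
noncomputable def Umin (s : S) : S.Opens :=
  (Finset.univ.filter (fun i => s ∈ U i)).inf U

/-- The diagram of open subschemes indexed by the poset `𝒥 = {U^s : s ∈ S}` (ordered by
inclusion), sending each member to the corresponding open subscheme of `S` and each
inclusion to the corresponding open immersion. -/
noncomputable def UminDiagram : {W : S.Opens // W ∈ Set.range (Umin S U)} ⥤ Scheme.{u} where
  obj W := W.1.toScheme
  map {V W} f := S.homOfLE (show V.1 ≤ W.1 from leOfHom f)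
  map_id V := by
    rw [← cancel_mono V.1.ι, Scheme.homOfLE_ι, Category.id_comp]
  map_comp {V W Z} f g := by
    rw [← cancel_mono Z.1.ι, Category.assoc, Scheme.homOfLE_ι, Scheme.homOfLE_ι,
      Scheme.homOfLE_ι]

/-- The cocone over `UminDiagram` given by the open immersions `U^s ↪ S`. -/
noncomputable def UminCocone : Cocone (UminDiagram S U) where
  pt := S
  ι :=
    { app := fun W => W.1.ι
      naturality := fun V W f => by
        dsimp only [UminDiagram]
        simp only [Functor.const_obj_map, Category.comp_id]
        exact Scheme.homOfLE_ι _ _ }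

namespace AlgebraicGeometry.Scheme

variable {X : Scheme.{u}}

noncomputable def OpenCover.isColimitMapCoconeForgetToLocallyRingedSpace
    (𝒰 : X.OpenCover) [Category 𝒰.I₀] [Quiver.IsThin 𝒰.I₀] [Small.{u} 𝒰.I₀]
    [𝒰.LocallyDirected] :
    IsColimit (forgetToLocallyRingedSpace.mapCocone 𝒰.coconeOfLocallyDirected) :=
  isColimitOfPreserves _ 𝒰.isColimitCoconeOfLocallyDirected

lemma pullback_fst_ι_apply_mem_inf {V W : X.Opens} (p : ↥(pullback V.ι W.ι)) :
    (pullback.fst V.ι W.ι ≫ V.ι) p ∈ V ⊓ W := by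
  constructor
  · rw [Hom.comp_apply]
    exact (pullback.fst V.ι W.ι p).2
  · rw [pullback.condition, Hom.comp_apply]
    exact (pullback.snd V.ι W.ι p).2

lemma pullback_lift_homOfLE_apply {V W Z : X.Opens} (hZ : Z ≤ V ⊓ W)
    (p : ↥(pullback V.ι W.ι)) (z : Z.toScheme) (hz : Z.ι z = (pullback.fst V.ι W.ι ≫ V.ι) p) :
    pullback.lift (X.homOfLE (hZ.trans inf_le_left)) (X.homOfLE (hZ.trans inf_le_right))
      (by simp) z = p := by
  apply (pullback.fst V.ι W.ι ≫ V.ι).isOpenEmbedding.injective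
  rw [← Hom.comp_apply, pullback.lift_fst_assoc, homOfLE_ι, hz]

variable {𝒥 : Set X.Opens} (hcov : ∀ x : X, ∃ W ∈ 𝒥, x ∈ W)

noncomputable def openCoverOfOpens : X.OpenCover :=
  X.openCoverOfIsOpenCover (Subtype.val : 𝒥 → X.Opens) <| by
    refine eq_top_iff.2 fun x _ => ?_
    obtain ⟨W, hW, hx⟩ := hcov x
    exact Opens.mem_iSup.2 ⟨⟨W, hW⟩, hx⟩

instance : Preorder (openCoverOfOpens hcov).I₀ :=
  inferInstanceAs (Preorder 𝒥)

noncomputable abbrev openCoverOfOpens.locallyDirected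
    (hdir : ∀ V ∈ 𝒥, ∀ W ∈ 𝒥, ∀ x ∈ V ⊓ W, ∃ Z ∈ 𝒥, x ∈ Z ∧ Z ≤ V ⊓ W) :
    (openCoverOfOpens hcov).LocallyDirected where
  trans {V W} hVW := X.homOfLE (show V.1 ≤ W.1 from leOfHom hVW)
  trans_id V := X.homOfLE_rfl V.1
  trans_comp _ _ := (X.homOfLE_homOfLE _ _).symm
  w _ := X.homOfLE_ι _
  directed {V W} p := by
    obtain ⟨Z, hZ, hpZ, hZVW⟩ := hdir V.1 V.2 W.1 W.2 _ (pullback_fst_ι_apply_mem_inf p)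
    exact ⟨⟨Z, hZ⟩, homOfLE (hZVW.trans inf_le_left), homOfLE (hZVW.trans inf_le_right),
      _, pullback_lift_homOfLE_apply hZVW p ⟨_, hpZ⟩ rfl⟩
  property_trans hVW := inferInstanceAs (IsOpenImmersion (X.homOfLE (leOfHom hVW)))

lemma isAffineOpen_finset_inf
    (hsemisep : ∀ V W : X.Opens, IsAffineOpen V → IsAffineOpen W → IsAffineOpen (V ⊓ W))
    {ι : Type*} {F : Finset ι} (hF : F.Nonempty) {V : ι → X.Opens}
    (hV : ∀ i ∈ F, IsAffineOpen (V i)) : IsAffineOpen (F.inf V) := by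
  induction hF using Finset.Nonempty.cons_induction with
  | singleton i => simpa using hV i (Finset.mem_singleton_self i)
  | cons i F _ _ ih =>
    rw [Finset.inf_cons]
    exact hsemisep _ _ (hV i (Finset.mem_cons_self i F))
      (ih fun j hj => hV j (Finset.mem_cons_of_mem hj))

end AlgebraicGeometry.Scheme

lemma mem_Umin_iff (s x : S) : x ∈ Umin S U s ↔ ∀ i, s ∈ U i → x ∈ U i := by
  simp [Umin, ← SetLike.mem_coe, Opens.coe_finset_inf]

lemma mem_Umin_self (s : S) : s ∈ Umin S U s :=
  (mem_Umin_iff S U s s).2 fun _ h => h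

lemma Umin_le_Umin {s x : S} (h : x ∈ Umin S U s) : Umin S U x ≤ Umin S U s :=
  fun _ hy => (mem_Umin_iff S U s _).2 fun i hi =>
    (mem_Umin_iff S U x _).1 hy i ((mem_Umin_iff S U s x).1 h i hi)

lemma exists_mem_range_Umin (x : S) : ∃ W ∈ Set.range (Umin S U), x ∈ W :=
  ⟨_, ⟨x, rfl⟩, mem_Umin_self S U x⟩

lemma exists_mem_range_Umin_le_inf :
    ∀ V ∈ Set.range (Umin S U), ∀ W ∈ Set.range (Umin S U), ∀ x ∈ V ⊓ W,
      ∃ Z ∈ Set.range (Umin S U), x ∈ Z ∧ Z ≤ V ⊓ W := by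
  rintro _ ⟨s, rfl⟩ _ ⟨t, rfl⟩ x hx
  exact ⟨_, ⟨x, rfl⟩, mem_Umin_self S U x, le_inf (Umin_le_Umin S U hx.1) (Umin_le_Umin S U hx.2)⟩

lemma isAffineOpen_Umin
    (hsemisep : ∀ V W : S.Opens, IsAffineOpen V → IsAffineOpen W → IsAffineOpen (V ⊓ W))
    (haff : ∀ i, IsAffineOpen (U i)) (hcov : ∀ x : S, ∃ i, x ∈ U i) (s : S) :
    IsAffineOpen (Umin S U s) := by
  classical
  obtain ⟨i, hi⟩ := hcov s
  exact Scheme.isAffineOpen_finset_inf hsemisep ⟨i, by simpa using hi⟩ fun i _ => haff i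

theorem UminCocone_isColimit
    (hsemisep : ∀ V W : S.Opens, IsAffineOpen V → IsAffineOpen W → IsAffineOpen (V ⊓ W))
    (haff : ∀ i, IsAffineOpen (U i)) (hcov : ∀ x : S, ∃ i, x ∈ U i) :
    (∀ s : S, IsAffineOpen (Umin S U s)) ∧
      Nonempty (IsColimit
        (Scheme.forgetToLocallyRingedSpace.mapCocone (UminCocone S U))) := by
  refine ⟨isAffineOpen_Umin S U hsemisep haff hcov, ⟨?_⟩⟩
  letI := Scheme.openCoverOfOpens.locallyDirected (exists_mem_range_Umin S U)
    (exists_mem_range_Umin_le_inf S U)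
  -- `UminCocone S U` is definitionally the `coconeOfLocallyDirected` of this cover.
  exact Scheme.OpenCover.isColimitMapCoconeForgetToLocallyRingedSpace
    (Scheme.openCoverOfOpens (exists_mem_range_Umin S U))
end

section
/- Let S be a scheme, V an affine open subscheme of S, and W₁, W₂ ⊆ V affine open subschemes such that W₁ ∩ W₂ is also affine. Then the canonical ring homomorphism Γ(W₁, 𝒪_S) ⊗_{Γ(V, 𝒪_S)} Γ(W₂, 𝒪_S) → Γ(W₁ ∩ W₂, 𝒪_S), induced by the restriction maps Γ(W₁, 𝒪_S) → Γ(W₁ ∩ W₂, 𝒪_S) and Γ(W₂, 𝒪_S) → Γ(W₁ ∩ W₂, 𝒪_S), is an isomorphism; equivalently, W₁ ∩ W₂ is the fiber product W₁ ×_V W₂ in the category of schemes and Spec(Γ(W₁, 𝒪_S) ⊗_{Γ(V, 𝒪_S)} Γ(W₂, 𝒪_S)) ≅ W₁ ∩ W₂. -/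
/-!
Open immersions are stable under base change, so `W₁ ∩ W₂` is the fibre product `W₁ ×_V W₂`.
When all four opens are affine, the isomorphisms `U ≅ Spec Γ(U)` identify this square with
`Spec` of the square of restriction maps; since `Spec` is fully faithful it reflects the
pullback, so the square of rings is a pushout, i.e. `Γ(W₁ ∩ W₂) ≅ Γ(W₁) ⊗_{Γ(V)} Γ(W₂)`.
-/

open AlgebraicGeometry CategoryTheory Opposite Limits TensorProduct

universe u

namespace CommRingCat

theorem bijective_productMap_of_isPushout {R A B C : Type u} [CommRing R] [CommRing A]
    [CommRing B] [CommRing C] [Algebra R A] [Algebra R B] [Algebra R C]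
    (F₁ : A →ₐ[R] C) (F₂ : B →ₐ[R] C)
    (h : IsPushout (ofHom (algebraMap R A)) (ofHom (algebraMap R B))
      (ofHom F₁.toRingHom) (ofHom F₂.toRingHom)) :
    Function.Bijective (Algebra.TensorProduct.productMap F₁ F₂) := by
  let e := (isPushout_tensorProduct R A B).isoIsPushout _ _ h
  let φ : of (A ⊗[R] B) ⟶ of C := ofHom (Algebra.TensorProduct.productMap F₁ F₂).toRingHom
  have hφ : φ = e.hom :=
    (isPushout_tensorProduct R A B).hom_ext (by ext; simp [φ, e]) (by ext; simp [φ, e])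
  have : IsIso φ := hφ ▸ inferInstance
  exact ConcreteCategory.bijective_of_isIso φ

end CommRingCat

namespace AlgebraicGeometry.IsAffineOpen

variable {S : Scheme.{u}}

theorem homOfLE_isoSpec_hom {U U' : S.Opens} (hU : IsAffineOpen U) (hU' : IsAffineOpen U')
    (hle : U ≤ U') :
    S.homOfLE hle ≫ hU'.isoSpec.hom =
      hU.isoSpec.hom ≫ Spec.map (S.presheaf.map (homOfLE hle).op) := by
  rw [← cancel_epi hU.isoSpec.inv, ← cancel_mono hU'.isoSpec.inv, ← cancel_mono U'.ι]
  simpa using (hU'.map_fromSpec hU (homOfLE hle).op).symm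

theorem isPushout_presheaf_map_inf {V W₁ W₂ : S.Opens} (hV : IsAffineOpen V)
    (hW₁ : IsAffineOpen W₁) (hW₂ : IsAffineOpen W₂) (hW : IsAffineOpen (W₁ ⊓ W₂))
    (h₁ : W₁ ≤ V) (h₂ : W₂ ≤ V) :
    IsPushout (S.presheaf.map (homOfLE h₁).op) (S.presheaf.map (homOfLE h₂).op)
      (S.presheaf.map (homOfLE (inf_le_left : W₁ ⊓ W₂ ≤ W₁)).op)
      (S.presheaf.map (homOfLE (inf_le_right : W₁ ⊓ W₂ ≤ W₂)).op) := by
  have hSpec : IsPullback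
      (Spec.map (S.presheaf.map (homOfLE (inf_le_left : W₁ ⊓ W₂ ≤ W₁)).op))
      (Spec.map (S.presheaf.map (homOfLE (inf_le_right : W₁ ⊓ W₂ ≤ W₂)).op))
      (Spec.map (S.presheaf.map (homOfLE h₁).op)) (Spec.map (S.presheaf.map (homOfLE h₂).op)) :=
    (isPullback_opens_inf_le h₁ h₂).of_iso hW.isoSpec hW₁.isoSpec hW₂.isoSpec hV.isoSpec
      (homOfLE_isoSpec_hom hW hW₁ _) (homOfLE_isoSpec_hom hW hW₂ _)
      (homOfLE_isoSpec_hom hW₁ hV _) (homOfLE_isoSpec_hom hW₂ hV _)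
  exact (IsPullback.of_map_of_faithful (F := Scheme.Spec) hSpec).unop.flip

end AlgebraicGeometry.IsAffineOpen

/-- Let `S` be a scheme, `V` an affine open and `W₁, W₂ ⊆ V` affine opens
with `W₁ ∩ W₂` affine.  Then the canonical ring homomorphism
`Γ(W₁) ⊗_{Γ(V)} Γ(W₂) → Γ(W₁ ∩ W₂)` induced by the restriction maps is an isomorphism
(all `Γ(V)`-algebra structures coming from the restriction maps). -/
theorem affine_inter_tensorProduct_bijective
    {S : Scheme} (V W₁ W₂ : S.Opens) (hV : IsAffineOpen V)
    (hW₁ : IsAffineOpen W₁) (hW₂ : IsAffineOpen W₂)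
    (h₁ : W₁ ≤ V) (h₂ : W₂ ≤ V) (hW : IsAffineOpen (W₁ ⊓ W₂)) :
    letI : Algebra (S.presheaf.obj (op V)) (S.presheaf.obj (op W₁)) :=
      (S.presheaf.map (homOfLE h₁).op).hom.toAlgebra
    letI : Algebra (S.presheaf.obj (op V)) (S.presheaf.obj (op W₂)) :=
      (S.presheaf.map (homOfLE h₂).op).hom.toAlgebra
    letI : Algebra (S.presheaf.obj (op V)) (S.presheaf.obj (op (W₁ ⊓ W₂))) :=
      (S.presheaf.map (homOfLE (inf_le_left.trans h₁)).op).hom.toAlgebra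
    ∀ (F₁ : (S.presheaf.obj (op W₁)) →ₐ[S.presheaf.obj (op V)] (S.presheaf.obj (op (W₁ ⊓ W₂))))
      (F₂ : (S.presheaf.obj (op W₂)) →ₐ[S.presheaf.obj (op V)] (S.presheaf.obj (op (W₁ ⊓ W₂)))),
      F₁.toRingHom = (S.presheaf.map (homOfLE (inf_le_left : W₁ ⊓ W₂ ≤ W₁)).op).hom →
      F₂.toRingHom = (S.presheaf.map (homOfLE (inf_le_right : W₁ ⊓ W₂ ≤ W₂)).op).hom →
      Function.Bijective (Algebra.TensorProduct.productMap F₁ F₂) := by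
  let := (S.presheaf.map (homOfLE h₁).op).hom.toAlgebra
  let := (S.presheaf.map (homOfLE h₂).op).hom.toAlgebra
  let := (S.presheaf.map (homOfLE (inf_le_left.trans h₁ : W₁ ⊓ W₂ ≤ V)).op).hom.toAlgebra
  intro F₁ F₂ hF₁ hF₂
  refine CommRingCat.bijective_productMap_of_isPushout F₁ F₂ ?_
  rw [hF₁, hF₂]
  exact IsAffineOpen.isPushout_presheaf_map_inf hV hW₁ hW₂ hW h₁ h₂
end
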